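/- arXiv:math/0701691 — 8 statements merged into one kernel-verified Lean document; each statement's English description precedes it below -/
import Mathlib

section
/- For any finite multiset I = {v_1, ..., v_s} of vectors in F_2^n, the weight of the sum satisfies |∑I| = ∑_{J ⊆ I} (-2)^{|J|-1} |∏J|, where ∏J denotes the coordinatewise product (AND) of the vectors in J and the sum is over nonempty subsets J. -/
/-- Hamming weight of a vector in `F_2^n`. -/
def wt {n : ℕ} (v : Fin n → ZMod 2) : ℕ :=
  (Finset.univ.filter fun i => v i = 1).card

lemma wt_eq_sum {n : ℕ} (w : Fin n → ZMod 2) :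
    (wt w : ℤ) = ∑ i, if w i = 1 then (1 : ℤ) else 0 := by
  rw [wt, Finset.card_filter]
  push_cast
  rfl

lemma coord_identity (s : ℕ) (x : Fin s → ZMod 2) :
    (if (∑ j, x j) = 1 then (1 : ℤ) else 0) =
      ∑ J ∈ Finset.univ.powerset.filter (fun J : Finset (Fin s) => J ≠ ∅),
        (-2 : ℤ) ^ (J.card - 1) * ∏ j ∈ J, (if x j = 1 then (1 : ℤ) else 0) := by
  set T : Finset (Fin s) := Finset.univ.filter (fun j => x j = 1) with hT
  -- product is indicator of J ⊆ T
  have hprod : ∀ J : Finset (Fin s),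
      (∏ j ∈ J, (if x j = 1 then (1 : ℤ) else 0)) = if J ⊆ T then 1 else 0 := by
    intro J
    by_cases h : J ⊆ T
    · rw [if_pos h]
      apply Finset.prod_eq_one
      intro j hj
      have := h hj
      simp [hT] at this
      simp [this]
    · rw [if_neg h]
      obtain ⟨j, hjJ, hjT⟩ := Finset.not_subset.mp h
      apply Finset.prod_eq_zero hjJ
      simp [hT] at hjT
      simp [hjT]
  have hdom : (Finset.univ.powerset.filter (fun J : Finset (Fin s) => J ≠ ∅)).filter
      (fun J => J ⊆ T) = T.powerset.filter (fun J => J ≠ ∅) := by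
    ext J
    simp only [Finset.mem_filter, Finset.mem_powerset, Finset.subset_univ, true_and]
    tauto
  have hrhs : (∑ J ∈ Finset.univ.powerset.filter (fun J : Finset (Fin s) => J ≠ ∅),
        (-2 : ℤ) ^ (J.card - 1) * ∏ j ∈ J, (if x j = 1 then (1 : ℤ) else 0)) =
      ∑ J ∈ T.powerset.filter (fun J => J ≠ ∅), (-2 : ℤ) ^ (J.card - 1) := by
    have : ∀ J ∈ Finset.univ.powerset.filter (fun J : Finset (Fin s) => J ≠ ∅),
        (-2 : ℤ) ^ (J.card - 1) * ∏ j ∈ J, (if x j = 1 then (1 : ℤ) else 0) =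
        if J ⊆ T then (-2 : ℤ) ^ (J.card - 1) else 0 := by
      intro J _
      rw [hprod J, mul_ite, mul_one, mul_zero]
    rw [Finset.sum_congr rfl this, ← Finset.sum_filter, hdom]
  rw [hrhs]
  set S : ℤ := ∑ J ∈ T.powerset.filter (fun J => J ≠ ∅), (-2 : ℤ) ^ (J.card - 1) with hS
  -- key: (-2) * S = (-1)^T.card - 1
  have hfull : (∑ J ∈ T.powerset, (-2 : ℤ) ^ J.card) = (-1 : ℤ) ^ T.card := by
    have := Finset.prod_add (fun _ : Fin s => (-2 : ℤ)) (fun _ => (1 : ℤ)) T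
    simp only [Finset.prod_const, one_pow, mul_one] at this
    rw [← this]
    norm_num
  have hsplit : (∑ J ∈ T.powerset, (-2 : ℤ) ^ J.card) =
      (∑ J ∈ T.powerset.filter (fun J => J ≠ ∅), (-2 : ℤ) ^ J.card) + 1 := by
    rw [← Finset.sum_filter_add_sum_filter_not T.powerset (fun J => J ≠ ∅)]
    congr 1
    have : T.powerset.filter (fun J => ¬ J ≠ ∅) = {∅} := by
      ext J
      simp only [Finset.mem_filter, Finset.mem_powerset, not_not, Finset.mem_singleton]
      constructor
      · tauto
      · intro h; exact ⟨h ▸ Finset.empty_subset T, h⟩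
    rw [this]
    simp
  have hmul : (-2 : ℤ) * S = (∑ J ∈ T.powerset.filter (fun J => J ≠ ∅), (-2 : ℤ) ^ J.card) := by
    rw [hS, Finset.mul_sum]
    apply Finset.sum_congr rfl
    intro J hJ
    simp only [Finset.mem_filter] at hJ
    have hc : 1 ≤ J.card := Finset.card_pos.mpr (Finset.nonempty_iff_ne_empty.mpr hJ.2)
    rw [← pow_succ']
    congr 1
    omega
  have hkey : (-2 : ℤ) * S = (-1 : ℤ) ^ T.card - 1 := by
    rw [hmul]
    rw [hfull] at hsplit
    linarith
  -- left side: sum of x equals T.card mod 2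
  have hsum : (∑ j, x j) = (T.card : ZMod 2) := by
    have : (∑ j, x j) = ∑ j ∈ T, x j := by
      rw [hT]
      rw [Finset.sum_filter]
      apply Finset.sum_congr rfl
      intro j _
      by_cases h : x j = 1
      · simp [h]
      · have : x j = 0 := by
          revert h; generalize x j = a; revert a; decide
        simp [this, h]
    rw [this]
    have : ∑ j ∈ T, x j = ∑ j ∈ T, (1 : ZMod 2) := by
      apply Finset.sum_congr rfl
      intro j hj
      simp [hT] at hj
      exact hj
    rw [this, Finset.sum_const]
    simp
  rcases Nat.even_or_odd T.card with he | ho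
  · have h1 : (-1 : ℤ) ^ T.card = 1 := Even.neg_one_pow he
    have hS0 : S = 0 := by rw [h1] at hkey; linarith
    have hcast : (T.card : ZMod 2) = 0 := by
      obtain ⟨k, hk⟩ := he
      have h2 : (2 : ZMod 2) = 0 := by decide
      rw [hk]; push_cast
      calc (k : ZMod 2) + k = 2 * k := by ring
        _ = 0 := by rw [h2]; ring
    rw [hS0, hsum, hcast]
    norm_num
  · have h1 : (-1 : ℤ) ^ T.card = -1 := Odd.neg_one_pow ho
    have hS1 : S = 1 := by rw [h1] at hkey; linarith
    have hcast : (T.card : ZMod 2) = 1 := by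
      obtain ⟨k, hk⟩ := ho
      have h2 : (2 : ZMod 2) = 0 := by decide
      rw [hk]; push_cast; rw [h2]; ring
    rw [hS1, hsum, hcast]
    norm_num

/-- Weight of a sum in terms of weights of coordinatewise products
(sum over nonempty subsets). -/
theorem weight_sum_eq_alternating_sum_products (n s : ℕ)
    (v : Fin s → (Fin n → ZMod 2)) :
    (wt (∑ i, v i) : ℤ) =
      ∑ J ∈ Finset.univ.powerset.filter (fun J : Finset (Fin s) => J ≠ ∅),
        (-2 : ℤ) ^ (J.card - 1) * (wt (∏ j ∈ J, v j) : ℤ) := by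
  rw [wt_eq_sum]
  have step1 : (∑ i, if (∑ j, v j) i = 1 then (1 : ℤ) else 0) =
      ∑ i, ∑ J ∈ Finset.univ.powerset.filter (fun J : Finset (Fin s) => J ≠ ∅),
        (-2 : ℤ) ^ (J.card - 1) * ∏ j ∈ J, (if v j i = 1 then (1 : ℤ) else 0) := by
    apply Finset.sum_congr rfl
    intro i _
    have : (∑ j, v j) i = ∑ j, v j i := by simp [Finset.sum_apply]
    rw [this, coord_identity s (fun j => v j i)]
  rw [step1, Finset.sum_comm]
  apply Finset.sum_congr rfl
  intro J _
  rw [← Finset.mul_sum, wt_eq_sum]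
  congr 1
  apply Finset.sum_congr rfl
  intro i _
  have : (∏ j ∈ J, v j) i = ∏ j ∈ J, v j i := by simp [Finset.prod_apply]
  rw [this]
  by_cases h : (∏ j ∈ J, v j i) = 1
  · rw [if_pos h]
    apply Finset.prod_eq_one
    intro j hj
    by_cases hx : v j i = 1
    · simp [hx]
    · exfalso
      have hz : v j i = 0 := by
        revert hx; generalize v j i = a; revert a; decide
      have : (∏ j ∈ J, v j i) = 0 := Finset.prod_eq_zero hj hz
      rw [this] at h
      exact one_ne_zero h.symm
  · rw [if_neg h]
    have : ∃ j ∈ J, v j i ≠ 1 := by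
      by_contra hc
      push_neg at hc
      exact h (Finset.prod_eq_one hc)
    obtain ⟨j, hj, hjne⟩ := this
    exact Finset.prod_eq_zero hj (if_neg hjne)
end

section
/- For any finite nonempty family I = {v_1, ..., v_s} of vectors in F_2^n, one has 2^{s-1} |∏I| = ∑_{J ⊆ I, J ≠ ∅} (-1)^{|J|-1} |∑J|, as an identity of integers. -/
namespace WtAux

/-- Indicator of being `1`. -/
def f (a : ZMod 2) : ℤ := if a = 1 then 1 else 0

/-- Sign character. -/
def e (a : ZMod 2) : ℤ := if a = 1 then -1 else 1

lemma e_add : ∀ a b : ZMod 2, e (a + b) = e a * e b := by decide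

lemma f_mul : ∀ a b : ZMod 2, f (a * b) = f a * f b := by decide

lemma two_f : ∀ a : ZMod 2, 2 * f a = 1 - e a := by decide

lemma e_sum {ι : Type*} (J : Finset ι) (x : ι → ZMod 2) :
    e (∑ j ∈ J, x j) = ∏ j ∈ J, e (x j) := by
  classical
  induction J using Finset.cons_induction with
  | empty => simp [e]
  | cons a J ha ih => rw [Finset.sum_cons, Finset.prod_cons, e_add, ih]

lemma f_prod {ι : Type*} (J : Finset ι) (x : ι → ZMod 2) :
    f (∏ j ∈ J, x j) = ∏ j ∈ J, f (x j) := by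
  classical
  induction J using Finset.cons_induction with
  | empty => simp [f]
  | cons a J ha ih => rw [Finset.prod_cons, Finset.prod_cons, f_mul, ih]

lemma wt_eq {n : ℕ} (w : Fin n → ZMod 2) : (wt w : ℤ) = ∑ i, f (w i) := by
  rw [wt, Finset.card_filter]
  push_cast
  simp [f]

lemma key (s : ℕ) (hs : 0 < s) (x : Fin s → ZMod 2) :
    ∑ J ∈ Finset.univ.powerset.filter (fun J : Finset (Fin s) => J ≠ ∅),
      (-1 : ℤ) ^ (J.card - 1) * (2 * f (∑ j ∈ J, x j)) = 2 ^ s * f (∏ j, x j) := by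
  classical
  have step1 : ∑ J ∈ Finset.univ.powerset.filter (fun J : Finset (Fin s) => J ≠ ∅),
      (-1 : ℤ) ^ (J.card - 1) * (2 * f (∑ j ∈ J, x j)) =
      ∑ J ∈ (Finset.univ : Finset (Fin s)).powerset,
        (-((-1 : ℤ) ^ J.card) * (1 - ∏ j ∈ J, e (x j))) := by
    rw [Finset.sum_filter]
    refine Finset.sum_congr rfl fun J _ => ?_
    by_cases h : J = ∅
    · subst h; simp
    · rw [if_pos h, two_f, e_sum]
      have hc : J.card - 1 + 1 = J.card :=
        Nat.succ_pred_eq_of_pos (Finset.card_pos.mpr (Finset.nonempty_iff_ne_empty.mpr h))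
      conv_rhs => rw [← hc]
      rw [pow_succ]
      ring
  rw [step1]
  have step2 : ∑ J ∈ (Finset.univ : Finset (Fin s)).powerset,
      (-((-1 : ℤ) ^ J.card) * (1 - ∏ j ∈ J, e (x j))) =
      -(∑ J ∈ (Finset.univ : Finset (Fin s)).powerset, (-1 : ℤ) ^ J.card) +
        ∑ J ∈ (Finset.univ : Finset (Fin s)).powerset,
          ((-1 : ℤ) ^ J.card * ∏ j ∈ J, e (x j)) := by
    rw [← Finset.sum_neg_distrib, ← Finset.sum_add_distrib]
    refine Finset.sum_congr rfl fun J _ => ?_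
    ring
  rw [step2]
  have hz : ∑ J ∈ (Finset.univ : Finset (Fin s)).powerset, (-1 : ℤ) ^ J.card = 0 := by
    refine Finset.sum_powerset_neg_one_pow_card_of_nonempty ?_
    have : Nonempty (Fin s) := ⟨⟨0, hs⟩⟩
    exact Finset.univ_nonempty
  rw [hz, neg_zero, zero_add]
  have step3 : ∑ J ∈ (Finset.univ : Finset (Fin s)).powerset,
      ((-1 : ℤ) ^ J.card * ∏ j ∈ J, e (x j)) =
      ∏ j : Fin s, (-(e (x j)) + 1) := by
    rw [Finset.prod_add]
    refine Finset.sum_congr rfl fun J _ => ?_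
    have : ∏ i ∈ J, -e (x i) = ∏ i ∈ J, ((-1 : ℤ) * e (x i)) := by
      refine Finset.prod_congr rfl fun i _ => by ring
    rw [this, Finset.prod_mul_distrib, Finset.prod_const]
    simp
  rw [step3]
  have step4 : ∏ j : Fin s, (-(e (x j)) + 1) = ∏ j : Fin s, (2 * f (x j)) := by
    refine Finset.prod_congr rfl fun j _ => ?_
    rw [two_f]; ring
  rw [step4, Finset.prod_mul_distrib, Finset.prod_const, Finset.card_univ, Fintype.card_fin,
    ← f_prod]

end WtAux

/-- `2^{s-1} |∏I| = ∑_{∅ ≠ J ⊆ I} (-1)^{|J|-1} |∑J|` for a nonempty family `I`. -/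
theorem weight_product_eq_alternating_sum_sums (n s : ℕ) (hs : 0 < s)
    (v : Fin s → (Fin n → ZMod 2)) :
    (2 : ℤ) ^ (s - 1) * (wt (∏ i, v i) : ℤ) =
      ∑ J ∈ Finset.univ.powerset.filter (fun J : Finset (Fin s) => J ≠ ∅),
        (-1 : ℤ) ^ (J.card - 1) * (wt (∑ j ∈ J, v j) : ℤ) := by
  classical
  have h2 : (2 : ℤ) ≠ 0 := by norm_num
  apply mul_left_cancel₀ h2
  have hL : (2 : ℤ) * ((2 : ℤ) ^ (s - 1) * (wt (∏ i, v i) : ℤ)) =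
      (2 : ℤ) ^ s * (wt (∏ i, v i) : ℤ) := by
    rw [← mul_assoc, ← pow_succ']
    congr 2
    omega
  rw [hL, Finset.mul_sum]
  have hR : ∀ J : Finset (Fin s),
      (2 : ℤ) * ((-1 : ℤ) ^ (J.card - 1) * (wt (∑ j ∈ J, v j) : ℤ)) =
      ∑ i : Fin n, (-1 : ℤ) ^ (J.card - 1) * (2 * WtAux.f ((∑ j ∈ J, v j) i)) := by
    intro J
    rw [WtAux.wt_eq, Finset.mul_sum, Finset.mul_sum]
    exact Finset.sum_congr rfl fun i _ => by ring
  rw [Finset.sum_congr rfl fun J _ => hR J, Finset.sum_comm]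
  rw [WtAux.wt_eq, Finset.mul_sum]
  refine Finset.sum_congr rfl fun i _ => ?_
  have := WtAux.key s hs (fun j => v j i)
  simpa [Finset.sum_apply, Finset.prod_apply] using this.symm
end

section
/- Let W = F_2^{2^k} and integers 0 < l+1 < k. There exist linearly independent vectors w_0, ..., w_l ∈ W such that for every proper subset A ⊊ {w_0, ..., w_l} the coordinatewise product satisfies |∏A| = 2^{k−|A|}, while |w_0 * ⋯ * w_l| = 2^{k−l−2}. -/
/-!
Identify `W` with the Boolean functions on `F_2^k` and take `w_i = x_i` for `i < l` and
`w_l = maj(x_l, x_{l+1}, s)`, where `s = ∑_{i<l} (x_i + 1)`. A product over `A` not containing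
`l` is a product of distinct coordinates. If `l ∈ A` but some `j < l` is missing from `A`,
translating by `e_j + e_l + e_{l+1}` preserves the remaining constraints and flips `s`, so it
flips the self-dual majority: `w_l` takes the value `1` on exactly half of the remaining points.
When `A` is everything, `s = 0` and `w_l = x_l x_{l+1}`, which costs one extra factor `1/2`.
Linear independence is witnessed by points `p_i` with `w_j(p_i) = δ_ij`.
-/

open Finset

lemma card_filter_forall_mem_eq {σ R : Type*} [Fintype σ] [DecidableEq σ] [Fintype R]
    [DecidableEq R] (S : Finset σ) (r : R) :
    #{x : σ → R | ∀ i ∈ S, x i = r} = Fintype.card R ^ (Fintype.card σ - #S) := by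
  have hpi : ({x : σ → R | ∀ i ∈ S, x i = r} : Finset _) =
      Fintype.piFinset fun i => if i ∈ S then {r} else univ := by
    ext x
    simp only [mem_filter, mem_univ, true_and, Fintype.mem_piFinset]
    exact forall_congr' fun i => by split_ifs with hi <;> simp [hi]
  rw [hpi, Fintype.card_piFinset, ← card_compl]
  simp only [apply_ite, card_singleton, card_univ, prod_ite, prod_const_one, prod_const, one_mul]
  congr 2
  ext
  simp

lemma two_mul_card_filter_and_eq_card_filter {α : Type*} [Fintype α] (p q : α → Prop)
    [DecidablePred p] [DecidablePred q] (τ : α ≃ α) (hp : ∀ x, p (τ x) ↔ p x)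
    (hq : ∀ x, q (τ x) ↔ ¬ q x) :
    2 * #{x | p x ∧ q x} = #{x | p x} := by
  have hswap : #{x | p x ∧ q x} = #{x | p x ∧ ¬ q x} :=
    card_equiv τ fun x => by simp [hp, hq]
  rw [← card_filter_add_card_filter_not (s := {x | p x}) q, filter_filter, filter_filter,
    ← hswap, two_mul]

lemma wt_prod_comp_symm {X ι : Type*} [Fintype X] {n : ℕ} (e : X ≃ Fin n)
    (f : ι → X → ZMod 2) (A : Finset ι) :
    wt (∏ i ∈ A, f i ∘ e.symm) = #{x | ∀ i ∈ A, f i x = 1} :=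
  card_equiv e.symm fun y => by simp [Finset.prod_apply, prod_eq_one_iff]

lemma linearIndependent_of_apply_eq_single {ι X R : Type*} [DecidableEq ι] [Semiring R]
    (f : ι → X → R) (p : ι → X) (h : ∀ i j, f j (p i) = (Pi.single j 1 : ι → R) i) :
    LinearIndependent R f :=
  .of_comp (LinearMap.funLeft R R p) <| by
    convert Pi.linearIndependent_single_one ι R using 1
    funext j i
    exact h i j

def majority (a b c : ZMod 2) : ZMod 2 := a * b + c * (a + b)

lemma majority_add_one (a b c : ZMod 2) :
    majority (a + 1) (b + 1) (c + 1) = majority a b c + 1 := by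
  revert a b c
  decide

section MajorityFamily

variable {σ : Type*} {l : ℕ} (c : Fin (l + 2) ↪ σ)

def zeroParity (x : σ → ZMod 2) : ZMod 2 :=
  ∑ i ∈ univ.erase (Fin.last l), (x (c i.castSucc) + 1)

def majorityFamily (i : Fin (l + 1)) (x : σ → ZMod 2) : ZMod 2 :=
  if i = Fin.last l then majority (x (c i.castSucc)) (x (c (Fin.last _))) (zeroParity c x)
  else x (c i.castSucc)

def dualPoint [DecidableEq σ] (i : Fin (l + 1)) : σ → ZMod 2 :=
  if i = Fin.last l then Pi.single (c i.castSucc) 1 + Pi.single (c (Fin.last _)) 1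
  else Pi.single (c i.castSucc) 1

def flipVector [DecidableEq σ] (j : Fin (l + 1)) : σ → ZMod 2 :=
  Pi.single (c j.castSucc) 1 + Pi.single (c (Fin.last l).castSucc) 1 +
    Pi.single (c (Fin.last _)) 1

variable {c}

lemma majorityFamily_of_ne_last {i : Fin (l + 1)} (hi : i ≠ Fin.last l) (x : σ → ZMod 2) :
    majorityFamily c i x = x (c i.castSucc) :=
  if_neg hi

lemma majorityFamily_last (x : σ → ZMod 2) :
    majorityFamily c (Fin.last l) x =
      majority (x (c (Fin.last l).castSucc)) (x (c (Fin.last _))) (zeroParity c x) :=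
  if_pos rfl

lemma zeroParity_eq_zero {x : σ → ZMod 2} (hx : ∀ i ≠ Fin.last l, x (c i.castSucc) = 1) :
    zeroParity c x = 0 :=
  sum_eq_zero fun i hi => by rw [hx i (ne_of_mem_erase hi)]; decide

variable [DecidableEq σ]

lemma majorityFamily_dualPoint (i j : Fin (l + 1)) :
    majorityFamily c j (dualPoint c i) = (Pi.single j 1 : Fin (l + 1) → ZMod 2) i := by
  by_cases hi : i = Fin.last l <;> by_cases hj : j = Fin.last l <;>
    simp [dualPoint, majorityFamily, majority, Pi.single_apply, c.injective.eq_iff, hi, hj,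
      eq_comm, (by decide : (1 : ZMod 2) + 1 = 0)]

lemma flipVector_apply_castSucc {i : Fin (l + 1)} (hi : i ≠ Fin.last l) (j : Fin (l + 1)) :
    flipVector c j (c i.castSucc) = if i = j then 1 else 0 := by
  simp [flipVector, Pi.single_apply, c.injective.eq_iff, hi]

lemma zeroParity_add_flipVector {j : Fin (l + 1)} (hj : j ≠ Fin.last l) (x : σ → ZMod 2) :
    zeroParity c (x + flipVector c j) = zeroParity c x + 1 := by
  have hterm : ∀ i ∈ univ.erase (Fin.last l), (x + flipVector c j) (c i.castSucc) + 1 =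
      (x (c i.castSucc) + 1) + if i = j then 1 else 0 := fun i hi => by
    rw [Pi.add_apply, flipVector_apply_castSucc (ne_of_mem_erase hi)]
    ring
  rw [zeroParity, sum_congr rfl hterm, sum_add_distrib, sum_ite_eq',
    if_pos (mem_erase.2 ⟨hj, mem_univ _⟩), zeroParity]

lemma majorityFamily_add_flipVector {i j : Fin (l + 1)} (hi : i ≠ Fin.last l) (hij : i ≠ j)
    (x : σ → ZMod 2) : majorityFamily c i (x + flipVector c j) = majorityFamily c i x := by
  rw [majorityFamily_of_ne_last hi, majorityFamily_of_ne_last hi, Pi.add_apply,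
    flipVector_apply_castSucc hi, if_neg hij, add_zero]

lemma majorityFamily_last_add_flipVector {j : Fin (l + 1)} (hj : j ≠ Fin.last l)
    (x : σ → ZMod 2) :
    majorityFamily c (Fin.last l) (x + flipVector c j) = majorityFamily c (Fin.last l) x + 1 := by
  have hl : flipVector c j (c (Fin.last l).castSucc) = 1 := by
    simp [flipVector, c.injective.eq_iff, hj.symm]
  have hl' : flipVector c j (c (Fin.last _)) = 1 := by simp [flipVector, c.injective.eq_iff]
  rw [majorityFamily_last, majorityFamily_last, Pi.add_apply, Pi.add_apply, hl, hl',
    zeroParity_add_flipVector hj, majority_add_one]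

variable [Fintype σ]

lemma card_majorityFamily_of_last_notMem {A : Finset (Fin (l + 1))} (hA : Fin.last l ∉ A) :
    #{x : σ → ZMod 2 | ∀ i ∈ A, majorityFamily c i x = 1} = 2 ^ (Fintype.card σ - #A) := by
  have hiff : ∀ x : σ → ZMod 2, (∀ i ∈ A, majorityFamily c i x = 1) ↔
      ∀ j ∈ A.map (Fin.castSuccEmb.trans c), x j = 1 := fun x => by
    simp only [forall_mem_map]
    exact forall₂_congr fun i hi => by
      rw [majorityFamily_of_ne_last (ne_of_mem_of_not_mem hi hA)]
      rfl
  simp_rw [hiff, card_filter_forall_mem_eq, card_map, ZMod.card]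

lemma card_majorityFamily_of_last_mem {A : Finset (Fin (l + 1))} (hl : Fin.last l ∈ A)
    (hA : A ≠ univ) :
    #{x : σ → ZMod 2 | ∀ i ∈ A, majorityFamily c i x = 1} = 2 ^ (Fintype.card σ - #A) := by
  obtain ⟨j, hj⟩ : ∃ j, j ∉ A := by simpa [eq_univ_iff_forall] using hA
  have hjl : j ≠ Fin.last l := (ne_of_mem_of_not_mem hl hj).symm
  have hhalf := two_mul_card_filter_and_eq_card_filter
    (fun x => ∀ i ∈ A.erase (Fin.last l), majorityFamily c i x = 1)
    (fun x => majorityFamily c (Fin.last l) x = 1) (Equiv.addRight (flipVector c j))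
    (fun x => forall₂_congr fun i hi => by
      rw [Equiv.coe_addRight, majorityFamily_add_flipVector (ne_of_mem_erase hi)
        (ne_of_mem_of_not_mem (mem_of_mem_erase hi) hj)])
    (fun x => by
      rw [Equiv.coe_addRight, majorityFamily_last_add_flipVector hjl]
      exact (by decide : ∀ a : ZMod 2, a + 1 = 1 ↔ ¬ a = 1) _)
  rw [card_majorityFamily_of_last_notMem (notMem_erase _ _), card_erase_of_mem hl] at hhalf
  have hsplit : ∀ x : σ → ZMod 2, (∀ i ∈ A, majorityFamily c i x = 1) ↔
      (∀ i ∈ A.erase (Fin.last l), majorityFamily c i x = 1) ∧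
        majorityFamily c (Fin.last l) x = 1 := by
    intro x
    conv_lhs => rw [← insert_erase hl]
    rw [forall_mem_insert, and_comm]
  have hAl : #A ≤ l + 1 := (card_le_univ A).trans_eq (Fintype.card_fin _)
  have hσ : l + 2 ≤ Fintype.card σ := by simpa using Fintype.card_le_of_embedding c
  have hA0 : 0 < #A := card_pos.2 ⟨_, hl⟩
  rw [show Fintype.card σ - (#A - 1) = Fintype.card σ - #A + 1 by omega, pow_succ'] at hhalf
  simp_rw [hsplit]
  exact Nat.eq_of_mul_eq_mul_left two_pos hhalf

lemma card_majorityFamily_of_ne_univ {A : Finset (Fin (l + 1))} (hA : A ≠ univ) :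
    #{x : σ → ZMod 2 | ∀ i ∈ A, majorityFamily c i x = 1} = 2 ^ (Fintype.card σ - #A) := by
  by_cases hl : Fin.last l ∈ A
  · exact card_majorityFamily_of_last_mem hl hA
  · exact card_majorityFamily_of_last_notMem hl

lemma card_majorityFamily_univ :
    #{x : σ → ZMod 2 | ∀ i, majorityFamily c i x = 1} = 2 ^ (Fintype.card σ - (l + 2)) := by
  have hiff : ∀ x : σ → ZMod 2,
      (∀ i, majorityFamily c i x = 1) ↔ ∀ j ∈ univ.map c, x j = 1 := fun x => by
    simp only [forall_mem_map, mem_univ, forall_const]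
    constructor
    · intro hx j
      have hfirst : ∀ i ≠ Fin.last l, x (c i.castSucc) = 1 := fun i hi => by
        rw [← majorityFamily_of_ne_last hi x]
        exact hx i
      have hlast := hx (Fin.last l)
      rw [majorityFamily_last, zeroParity_eq_zero hfirst, majority, zero_mul, add_zero,
        mul_eq_one] at hlast
      induction j using Fin.lastCases with
      | last => exact hlast.2
      | cast i => exact if hi : i = Fin.last l then hi ▸ hlast.1 else hfirst i hi
    · intro hx i
      by_cases hi : i = Fin.last l
      · rw [hi, majorityFamily_last, hx, hx, zeroParity_eq_zero fun i _ => hx _]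
        rfl
      · rw [majorityFamily_of_ne_last hi, hx]
  simp_rw [hiff, card_filter_forall_mem_eq, card_map, card_univ, Fintype.card_fin, ZMod.card]

end MajorityFamily

/-- Proposition (CKey): in `W = F_2^{2^k}`, for `0 < l+1 < k`, there are linearly
independent vectors `w_0, …, w_l` such that every proper subfamily has coordinatewise
product of weight `2^{k-|A|}`, while `|w_0 * ⋯ * w_l| = 2^{k-l-2}`. -/
theorem ckey (k l : ℕ) (h : l + 1 < k) :
    ∃ w : Fin (l + 1) → (Fin (2 ^ k) → ZMod 2),
      LinearIndependent (ZMod 2) w ∧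
      (∀ A : Finset (Fin (l + 1)), A ≠ Finset.univ →
        wt (∏ i ∈ A, w i) = 2 ^ (k - A.card)) ∧
      wt (∏ i, w i) = 2 ^ (k - l - 2) := by
  let c : Fin (l + 2) ↪ Fin k := Fin.castLEEmb h
  obtain ⟨e⟩ : Nonempty ((Fin k → ZMod 2) ≃ Fin (2 ^ k)) :=
    ⟨Fintype.equivFinOfCardEq (by simp)⟩
  refine ⟨fun i => majorityFamily c i ∘ e.symm, ?_, fun A hA => ?_, ?_⟩
  · exact linearIndependent_of_apply_eq_single _ (e ∘ dualPoint c) fun i j => by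
      simpa using majorityFamily_dualPoint i j
  · rw [wt_prod_comp_symm]
    -- `convert` reconciles the decidability instances of `∀ i ∈ A` over `Fin (l + 1)`
    convert card_majorityFamily_of_ne_univ (c := c) hA using 3
    exact (Fintype.card_fin k).symm
  · rw [wt_prod_comp_symm]
    simpa [Nat.sub_sub] using card_majorityFamily_univ (c := c)
end

section
/- Let V be a finite-dimensional F_2-vector space and P : V → F_2 a map with P(0)=0 of combinatorial degree r+1. Then there exists a binary linear code C of level r (i.e., r is the largest integer with 2^r dividing the weight of every codeword) and an F_2-linear isomorphism φ : V → C such that P(v) ≡ |φ(v)| / 2^r (mod 2) for every v ∈ V. -/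
/-- The `s`-th derived form of `P`. -/
def derForm {V : Type*} [AddCommMonoid V] (P : V → ZMod 2) (s : ℕ)
    (v : Fin s → V) : ZMod 2 :=
  ∑ J : Finset (Fin s), P (∑ j ∈ J, v j)

open Finset

theorem ZMod.eq_one_iff_ne_zero_two {a : ZMod 2} : a = 1 ↔ a ≠ 0 := by
  revert a
  decide

section Combinatorics

variable {ι : Type*} [DecidableEq ι]

theorem sum_powerset_sum_powerset {R : Type*} [Ring R] [CharP R 2] (q : Finset ι → R)
    (S : Finset ι) : ∑ T ∈ S.powerset, ∑ U ∈ T.powerset, q U = q S := by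
  rw [sum_comm' (t' := S.powerset) (s' := fun U => Icc U S) (fun T U => by
    simp only [mem_powerset, mem_Icc]; exact ⟨fun h => ⟨⟨h.2, h.1⟩, h.2.trans h.1⟩,
      fun h => ⟨h.1.2, h.1.1⟩⟩)]
  refine (sum_eq_single S (fun U hU hUS => ?_) (by simp)).trans (by simp)
  have hlt : #U < #S := card_lt_card (ssubset_of_subset_of_ne (mem_powerset.1 hU) hUS)
  rw [sum_const, card_Icc_finset (mem_powerset.1 hU), nsmul_eq_mul, Nat.cast_pow,
    Nat.cast_ofNat, CharTwo.two_eq_zero, zero_pow (by omega), zero_mul]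

theorem card_powerset_filter_sum_eq_one (x : ι → ZMod 2) {S : Finset ι} {i : ι}
    (hi : i ∈ S) (hxi : x i = 1) :
    #{A ∈ S.powerset | ∑ j ∈ A, x j = 1} = 2 ^ (#S - 1) := by
  obtain ⟨S, hiS, rfl⟩ : ∃ S', i ∉ S' ∧ S = insert i S' :=
    ⟨S.erase i, notMem_erase i S, (insert_erase hi).symm⟩
  rw [card_filter, sum_powerset_insert hiS, ← sum_add_distrib, card_insert_of_notMem hiS,
    Nat.add_sub_cancel, ← card_powerset, card_eq_sum_ones]
  refine sum_congr rfl fun A hA => ?_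
  rw [sum_insert fun h => hiS (mem_powerset.1 hA h), hxi]
  generalize ∑ j ∈ A, x j = s
  revert s
  decide

theorem cast_card_powerset_filter_not_disjoint {T : Finset ι} (hT : T.Nonempty)
    (X : Finset ι) :
    (#{S ∈ T.powerset | ¬Disjoint S X} : ZMod 2) = if T ⊆ X then 1 else 0 := by
  have hsplit := card_filter_add_card_filter_not (s := T.powerset) (fun S => ¬Disjoint S X)
  have hdisj : {S ∈ T.powerset | ¬¬Disjoint S X} = (T \ X).powerset := by
    ext S; simp [subset_sdiff]
  rw [hdisj, card_powerset, card_powerset] at hsplit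
  have h := congrArg (Nat.cast : ℕ → ZMod 2) hsplit
  push_cast at h
  rw [CharTwo.two_eq_zero (R := ZMod 2), zero_pow hT.card_pos.ne', zero_pow_eq] at h
  simp only [card_eq_zero, sdiff_eq_empty_iff_subset] at h
  rw [← CharTwo.add_eq_zero.mp h]

theorem cast_sum_card_filter_not_disjoint_add_two_mul {𝒯 : Finset (Finset ι)}
    (h𝒯 : ∀ T ∈ 𝒯, T.Nonempty) (X : Finset ι) :
    ((∑ T ∈ 𝒯, #{S ∈ T.powerset | ¬Disjoint S X} + 2 * #X : ℕ) : ZMod 2)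
      = #{T ∈ 𝒯 | T ⊆ X} := by
  push_cast
  rw [CharTwo.two_eq_zero (R := ZMod 2), zero_mul, add_zero,
    sum_congr rfl fun T hT => cast_card_powerset_filter_not_disjoint (h𝒯 T hT) X, sum_boole]

end Combinatorics

theorem sum_powerset_eq_derForm {ι V : Type*} [LinearOrder ι] [AddCommMonoid V]
    (P : V → ZMod 2) (g : ι → V) (T : Finset ι) :
    ∑ U ∈ T.powerset, P (∑ i ∈ U, g i) = derForm P #T (g ∘ T.orderEmbOfFin rfl) := by
  set e := (T.orderEmbOfFin rfl).toEmbedding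
  have hT : univ.map e = T := map_orderEmbOfFin_univ T rfl
  symm
  refine sum_bij (fun J _ => J.map e) (fun J _ => ?_) (fun J _ J' _ => map_inj.1)
    (fun U hU => ?_) (fun J _ => by simp [sum_map, e])
  · exact mem_powerset.2 ((map_subset_map.2 (subset_univ J)).trans hT.subset)
  · obtain ⟨J, -, rfl⟩ := subset_map_iff.1 (hT ▸ mem_powerset.1 hU)
    exact ⟨J, mem_univ J, rfl⟩

section AlgebraicNormalForm

variable {ι V : Type*} [AddCommGroup V] [Module (ZMod 2) V]
  (P : V → ZMod 2) (b : Module.Basis ι (ZMod 2) V)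

noncomputable def anfCoeff (T : Finset ι) : ZMod 2 :=
  ∑ U ∈ T.powerset, P (∑ i ∈ U, b i)

theorem sum_support_repr (v : V) : ∑ i ∈ (b.repr v).support, b i = v := by
  conv_rhs => rw [← b.linearCombination_repr v, Finsupp.linearCombination_apply, Finsupp.sum]
  refine sum_congr rfl fun i hi => ?_
  rw [ZMod.eq_one_iff_ne_zero_two.2 (Finsupp.mem_support_iff.1 hi), one_smul]

theorem apply_eq_sum_anfCoeff [DecidableEq ι] (v : V) :
    P v = ∑ T ∈ (b.repr v).support.powerset, anfCoeff P b T := by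
  simp only [anfCoeff]
  rw [sum_powerset_sum_powerset, sum_support_repr]

theorem anfCoeff_empty (hP : P 0 = 0) : anfCoeff P b ∅ = 0 := by
  simp [anfCoeff, hP]

theorem anfCoeff_eq_zero_of_card_lt [LinearOrder ι] {r : ℕ}
    (hvanish : ∀ s, r + 1 < s → ∀ v : Fin s → V, derForm P s v = 0) {T : Finset ι}
    (hT : r + 1 < #T) : anfCoeff P b T = 0 := by
  rw [anfCoeff, sum_powerset_eq_derForm]
  exact hvanish _ hT _

variable [Fintype ι]

noncomputable def anfSupport : Finset (Finset ι) :=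
  {T | anfCoeff P b T ≠ 0}

theorem apply_eq_card_anfSupport [DecidableEq ι] (v : V) :
    P v = #{T ∈ anfSupport P b | T ⊆ (b.repr v).support} := by
  have hsupp : {T ∈ (b.repr v).support.powerset | anfCoeff P b T ≠ 0}
      = {T ∈ anfSupport P b | T ⊆ (b.repr v).support} := by
    ext T
    simp [anfSupport, and_comm]
  rw [apply_eq_sum_anfCoeff P b v, ← sum_filter_ne_zero, hsupp, cast_card]
  refine sum_congr rfl fun T hT => ?_
  have hT : anfCoeff P b T ≠ 0 := (mem_filter.1 (mem_filter.1 hT).1).2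
  exact ZMod.eq_one_iff_ne_zero_two.2 hT

theorem nonempty_and_card_le_of_mem_anfSupport [LinearOrder ι] {r : ℕ} (hP : P 0 = 0)
    (hvanish : ∀ s, r + 1 < s → ∀ v : Fin s → V, derForm P s v = 0) {T : Finset ι}
    (hT : T ∈ anfSupport P b) : T.Nonempty ∧ #T ≤ r + 1 := by
  have hT : anfCoeff P b T ≠ 0 := (mem_filter.1 hT).2
  refine ⟨nonempty_iff_ne_empty.2 ?_, le_of_not_gt fun hlt => hT ?_⟩
  · rintro rfl
    exact hT (anfCoeff_empty P b hP)
  · exact anfCoeff_eq_zero_of_card_lt P b hvanish hlt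

end AlgebraicNormalForm

section Code

variable {ι κ : Type*}

noncomputable def subsetSumCode (I : Finset κ) (a : κ → Finset ι) :
    (ι →₀ ZMod 2) →ₗ[ZMod 2] (Fin #I → ZMod 2) :=
  LinearMap.pi fun k => ∑ j ∈ a (I.equivFin.symm k), Finsupp.lapply j

theorem subsetSumCode_apply (I : Finset κ) (a : κ → Finset ι) (x : ι →₀ ZMod 2)
    (k : Fin #I) :
    subsetSumCode I a x k = ∑ j ∈ a (I.equivFin.symm k), x j := by
  simp [subsetSumCode]

theorem wt_subsetSumCode (I : Finset κ) (a : κ → Finset ι) (x : ι →₀ ZMod 2) :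
    wt (subsetSumCode I a x) = #{i ∈ I | ∑ j ∈ a i, x j = 1} := by
  rw [wt, card_filter, card_filter, ← sum_coe_sort I]
  simp_rw [subsetSumCode_apply]
  exact I.equivFin.symm.sum_comp fun i => if ∑ j ∈ a i, x j = 1 then 1 else 0

theorem subsetSumCode_injective {I : Finset κ} {a : κ → Finset ι}
    (h : ∀ j, ∃ i ∈ I, a i = {j}) : Function.Injective (subsetSumCode I a) := by
  rw [← LinearMap.ker_eq_bot, LinearMap.ker_eq_bot']
  intro x hx
  ext j
  obtain ⟨i, hi, hai⟩ := h j
  simpa [subsetSumCode_apply, hai] using congrFun hx (I.equivFin ⟨i, hi⟩)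

theorem card_powerset_product_range_filter_sum_eq_one [DecidableEq ι] (x : ι →₀ ZMod 2)
    {r : ℕ} {S : Finset ι} (hS : #S ≤ r + 1) :
    #{p ∈ S.powerset ×ˢ range (2 ^ (r + 1 - #S)) | ∑ j ∈ p.1, x j = 1}
      = if Disjoint S x.support then 0 else 2 ^ r := by
  rw [filter_product_left (fun A => ∑ j ∈ A, x j = 1), card_product, card_range]
  split_ifs with h
  · rw [filter_eq_empty_iff.2 fun A hA => ?_, card_empty, zero_mul]
    rw [sum_eq_zero fun j hj =>
      Finsupp.notMem_support_iff.1 (disjoint_left.1 h (mem_powerset.1 hA hj))]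
    decide
  · obtain ⟨i, hiS, hix⟩ := not_disjoint_iff.1 h
    rw [card_powerset_filter_sum_eq_one x hiS
      (ZMod.eq_one_iff_ne_zero_two.2 (Finsupp.mem_support_iff.1 hix)), ← pow_add]
    have := card_pos.2 ⟨i, hiS⟩
    congr 1
    omega

variable [Fintype ι]

/-- `inl ⟨T, S, A, k⟩`, for `S ⊆ T ∈ 𝒯`, `A ⊆ S` and `k < 2 ^ (r + 1 - #S)`, indexes a copy
of the coordinate `∑ j ∈ A, x j`; `inr (j, k)`, for `k < 2 ^ (r + 1)`, indexes a copy of `x j`. -/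
def levelCodeIndex (r : ℕ) (𝒯 : Finset (Finset ι)) :
    Finset ((Σ _ : Finset ι, Σ _ : Finset ι, Finset ι × ℕ) ⊕ (ι × ℕ)) :=
  (𝒯.sigma fun T => T.powerset.sigma fun S => S.powerset ×ˢ range (2 ^ (r + 1 - #S))).disjSum
    (univ ×ˢ range (2 ^ (r + 1)))

noncomputable def levelCode (r : ℕ) (𝒯 : Finset (Finset ι)) :
    (ι →₀ ZMod 2) →ₗ[ZMod 2] (Fin #(levelCodeIndex r 𝒯) → ZMod 2) :=
  subsetSumCode (levelCodeIndex r 𝒯) (Sum.elim (fun p => p.2.2.1) fun p => {p.1})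

theorem levelCode_injective (r : ℕ) (𝒯 : Finset (Finset ι)) :
    Function.Injective (levelCode r 𝒯) :=
  subsetSumCode_injective fun j => ⟨.inr (j, 0), by simp [levelCodeIndex], rfl⟩

theorem wt_levelCode [DecidableEq ι] {r : ℕ} {𝒯 : Finset (Finset ι)}
    (h𝒯 : ∀ T ∈ 𝒯, #T ≤ r + 1) (x : ι →₀ ZMod 2) :
    wt (levelCode r 𝒯 x)
      = 2 ^ r * (∑ T ∈ 𝒯, #{S ∈ T.powerset | ¬Disjoint S x.support}
        + 2 * #x.support) := by
  rw [levelCode, wt_subsetSumCode, card_filter, levelCodeIndex, sum_disjSum, sum_sigma]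
  have hblocks : ∀ T ∈ 𝒯,
      (∑ q ∈ T.powerset.sigma fun S => S.powerset ×ˢ range (2 ^ (r + 1 - #S)),
        if ∑ j ∈ q.2.1, x j = 1 then 1 else 0)
      = 2 ^ r * #{S ∈ T.powerset | ¬Disjoint S x.support} := by
    intro T hT
    rw [sum_sigma, card_filter, mul_sum]
    refine sum_congr rfl fun S hS => ?_
    rw [← card_filter, card_powerset_product_range_filter_sum_eq_one x
      ((card_le_card (mem_powerset.1 hS)).trans (h𝒯 T hT))]
    split_ifs <;> simp
  have hsingletons : (∑ p ∈ univ ×ˢ range (2 ^ (r + 1)), if x p.1 = 1 then 1 else 0)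
      = 2 ^ (r + 1) * #x.support := by
    rw [← card_filter, filter_product_left (fun j => x j = 1), card_product, card_range, mul_comm]
    congr 2
    ext j
    simp [ZMod.eq_one_iff_ne_zero_two]
  calc _ = ∑ T ∈ 𝒯, 2 ^ r * #{S ∈ T.powerset | ¬Disjoint S x.support}
        + 2 ^ (r + 1) * #x.support := by
        congr 1
        · exact sum_congr rfl hblocks
        · simpa using hsingletons
    _ = _ := by rw [← mul_sum, pow_succ]; ring

end Code

/-- Main Theorem: if `P : V → F_2`, `P(0) = 0`, has combinatorial degree `r + 1`,
then there is a binary linear code `C` of level `r` and an isomorphism `φ : V ≃ C`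
with `P(v) ≡ |φ(v)| / 2^r (mod 2)` for every `v`. -/
theorem main_theorem {V : Type*} [AddCommGroup V] [Module (ZMod 2) V]
    [FiniteDimensional (ZMod 2) V] (r : ℕ) (P : V → ZMod 2) (hP : P 0 = 0)
    (hvanish : ∀ s, r + 1 < s → ∀ v : Fin s → V, derForm P s v = 0)
    (hne : ∃ v : Fin (r + 1) → V, derForm P (r + 1) v ≠ 0) :
    ∃ (n : ℕ) (C : Submodule (ZMod 2) (Fin n → ZMod 2)) (φ : V ≃ₗ[ZMod 2] C),
      (∀ c ∈ C, 2 ^ r ∣ wt c) ∧ ¬(∀ c ∈ C, 2 ^ (r + 1) ∣ wt c) ∧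
      ∀ v : V, 2 ^ r ∣ wt (φ v : Fin n → ZMod 2) ∧
        P v = ((wt (φ v : Fin n → ZMod 2) / 2 ^ r : ℕ) : ZMod 2) := by
  let b := Module.finBasis (ZMod 2) V
  let 𝒯 := anfSupport P b
  have h𝒯 (T) (hT : T ∈ 𝒯) := nonempty_and_card_le_of_mem_anfSupport P b hP hvanish hT
  let φ := levelCode r 𝒯 ∘ₗ b.repr.toLinearMap
  have hφ : Function.Injective φ := (levelCode_injective r 𝒯).comp b.repr.injective
  let N (v : V) : ℕ := ∑ T ∈ 𝒯, #{S ∈ T.powerset | ¬Disjoint S (b.repr v).support}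
    + 2 * #(b.repr v).support
  have hwt (v : V) : wt (φ v) = 2 ^ r * N v := wt_levelCode (fun T hT => (h𝒯 T hT).2) _
  have hPN (v : V) : P v = N v := by
    rw [apply_eq_card_anfSupport P b v,
      cast_sum_card_filter_not_disjoint_add_two_mul fun T hT => (h𝒯 T hT).1]
  obtain ⟨w, hw⟩ := hne
  obtain ⟨J, -, hv₀⟩ := exists_ne_zero_of_sum_ne_zero hw
  refine ⟨_, LinearMap.range φ, LinearEquiv.ofInjective φ hφ, ?_, fun h => hv₀ ?_,
    fun v => ?_⟩
  · rintro _ ⟨v, rfl⟩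
    exact hwt v ▸ dvd_mul_right _ _
  · have hdvd := h (φ (∑ j ∈ J, w j)) ⟨_, rfl⟩
    rw [hwt, pow_succ, Nat.mul_dvd_mul_iff_left (by positivity)] at hdvd
    rw [hPN, ZMod.natCast_eq_zero_iff_even]
    exact even_iff_two_dvd.2 hdvd
  · rw [LinearEquiv.ofInjective_apply, hwt, Nat.mul_div_cancel_left _ (by positivity)]
    exact ⟨dvd_mul_right _ _, hPN v⟩
end

section
/- Let C ≤ F_2^n be a binary linear code of level r (so 2^r divides |c| for every c ∈ C), and define P : C → F_2 by P(c) ≡ |c| / 2^r (mod 2). Then the combinatorial degree of P is at most r+1; that is, the s-th derived form P_s is identically zero for all s > r+1. -/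
open Finset

lemma zmod2_cases (a : ZMod 2) : a = 0 ∨ a = 1 := by revert a; decide

lemma toggle_card {s : ℕ} (x : Fin s → ZMod 2) (j0 : Fin s) (hx : x j0 = 1) :
    (Finset.univ.filter fun J : Finset (Fin s) => ∑ j ∈ J, x j = 1).card
      = (Finset.univ.filter fun J : Finset (Fin s) => ∑ j ∈ J, x j = 0).card := by
  classical
  have key : ∀ J : Finset (Fin s),
      ∑ j ∈ (if j0 ∈ J then J.erase j0 else insert j0 J), x j = (∑ j ∈ J, x j) + 1 := by
    intro J
    by_cases hJ : j0 ∈ J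
    · simp only [hJ, if_true]
      have h1 := Finset.sum_erase_add J x hJ
      rw [hx] at h1
      rw [← h1]
      have h2 : (1 : ZMod 2) + 1 = 0 := by decide
      rw [add_assoc, h2, add_zero]
    · simp only [hJ, if_false, Finset.sum_insert hJ, hx]; ring
  have inv : ∀ J : Finset (Fin s),
      (if j0 ∈ (if j0 ∈ J then J.erase j0 else insert j0 J)
        then (if j0 ∈ J then J.erase j0 else insert j0 J).erase j0
        else insert j0 (if j0 ∈ J then J.erase j0 else insert j0 J)) = J := by
    intro J
    by_cases hJ : j0 ∈ J
    · simp [hJ, Finset.insert_erase hJ]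
    · simp [hJ, Finset.erase_insert hJ]
  apply Finset.card_bij' (fun J _ => if j0 ∈ J then J.erase j0 else insert j0 J)
    (fun J _ => if j0 ∈ J then J.erase j0 else insert j0 J)
  · intro J _; exact inv J
  · intro J _; exact inv J
  · intro J hJ
    simp only [Finset.mem_filter, Finset.mem_univ, true_and] at hJ ⊢
    rw [key, hJ]; decide
  · intro J hJ
    simp only [Finset.mem_filter, Finset.mem_univ, true_and] at hJ ⊢
    rw [key, hJ]; decide

lemma count_xor_one {s : ℕ} (x : Fin s → ZMod 2) :
    2 ^ (s - 1) ∣ (Finset.univ.filter fun J : Finset (Fin s) => ∑ j ∈ J, x j = 1).card := by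
  classical
  by_cases hx : ∃ j0, x j0 = 1
  · obtain ⟨j0, hj0⟩ := hx
    have hs1 : 1 ≤ s := j0.pos
    have hcompl : (Finset.univ.filter fun J : Finset (Fin s) => ∑ j ∈ J, x j = 0)
        = (Finset.univ.filter fun J : Finset (Fin s) => ¬ (∑ j ∈ J, x j = 1)) := by
      apply Finset.filter_congr
      intro J _
      rcases zmod2_cases (∑ j ∈ J, x j) with h0 | h1
      · simp [h0]
      · simp [h1]
    have htot := Finset.card_filter_add_card_filter_not
      (s := (Finset.univ : Finset (Finset (Fin s))))
      (p := fun J : Finset (Fin s) => ∑ j ∈ J, x j = 1)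
    rw [← hcompl, ← toggle_card x j0 hj0] at htot
    have hcard : (Finset.univ : Finset (Finset (Fin s))).card = 2 ^ s := by
      simp [Finset.card_univ, Fintype.card_finset]
    rw [hcard] at htot
    have h2s : 2 ^ s = 2 ^ (s - 1) * 2 := by
      rw [← pow_succ]; congr 1; omega
    refine ⟨1, ?_⟩
    omega
  · push_neg at hx
    have : (Finset.univ.filter fun J : Finset (Fin s) => ∑ j ∈ J, x j = 1) = ∅ := by
      apply Finset.filter_eq_empty_iff.mpr
      intro J _
      have : ∑ j ∈ J, x j = 0 := by
        apply Finset.sum_eq_zero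
        intro j _
        rcases zmod2_cases (x j) with h0 | h1
        · exact h0
        · exact absurd h1 (by simpa using hx j)
      simp [this]
    simp [this]

/-- If `C` is a binary linear code of level (at least) `r` and `P(c) = |c|/2^r mod 2`,
then the combinatorial degree of `P` is at most `r + 1`: `P_s ≡ 0` for `s > r + 1`. -/
theorem combinatorial_degree_le_of_code_level (n r : ℕ)
    (C : Submodule (ZMod 2) (Fin n → ZMod 2))
    (h : ∀ c ∈ C, 2 ^ r ∣ wt c) :
    ∀ s, r + 1 < s → ∀ v : Fin s → C,
      derForm (fun c : C => ((wt (c : Fin n → ZMod 2) / 2 ^ r : ℕ) : ZMod 2)) s v = 0 := by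
  intro s hs v
  classical
  have hmem : ∀ J : Finset (Fin s), (∑ j ∈ J, (v j : Fin n → ZMod 2)) ∈ C :=
    fun J => Submodule.sum_mem C fun j _ => (v j).2
  choose m hm using fun J : Finset (Fin s) => h _ (hmem J)
  have hcoe : ∀ J : Finset (Fin s),
      ((∑ j ∈ J, v j : C) : Fin n → ZMod 2) = ∑ j ∈ J, (v j : Fin n → ZMod 2) := by
    intro J; simp
  have hW : 2 ^ (s - 1) ∣ ∑ J : Finset (Fin s), wt (∑ j ∈ J, (v j : Fin n → ZMod 2)) := by
    simp only [wt, Finset.card_filter, Finset.sum_apply]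
    rw [Finset.sum_comm]
    refine Finset.dvd_sum fun i _ => ?_
    have := count_xor_one (fun j => (v j : Fin n → ZMod 2) i)
    rwa [Finset.card_filter] at this
  have hsum : ∑ J : Finset (Fin s), wt (∑ j ∈ J, (v j : Fin n → ZMod 2))
      = 2 ^ r * ∑ J : Finset (Fin s), m J := by
    rw [Finset.mul_sum]
    exact Finset.sum_congr rfl fun J _ => hm J
  have hdvd2 : 2 ∣ ∑ J : Finset (Fin s), m J := by
    have hpow : (2 : ℕ) ^ r * 2 ∣ 2 ^ r * ∑ J : Finset (Fin s), m J := by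
      rw [← hsum, ← pow_succ]
      exact dvd_trans (pow_dvd_pow 2 (by omega)) hW
    exact (mul_dvd_mul_iff_left (a := (2:ℕ)^r) (by positivity)).mp hpow
  have hdiv : ∀ J : Finset (Fin s),
      wt ((∑ j ∈ J, v j : C) : Fin n → ZMod 2) / 2 ^ r = m J := by
    intro J
    rw [hcoe J, hm J, Nat.mul_div_cancel_left _ (by positivity)]
  unfold derForm
  simp only [hdiv]
  rw [← Nat.cast_sum]
  exact (ZMod.natCast_eq_zero_iff _ _).mpr hdvd2
end

section
/- Let P : V → F_2 with P(0) = 0 and combinatorial degree exactly r+1 ≥ 1, and suppose C is a binary linear code with isomorphism φ : V → C such that 2^r divides |φ(v)| and P(v) ≡ |φ(v)|/2^r (mod 2) for all v. If P is not identically zero, then the level of C is exactly r (i.e., 2^{r+1} does not divide the weight of every codeword). -/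
/-- If `P` has combinatorial degree exactly `r+1`, `C` realizes `P` via `φ` as
`P(v) ≡ |φ(v)|/2^r (mod 2)`, and `P` is not identically zero, then the level of `C`
is exactly `r`. -/
theorem level_exact {V : Type*} [AddCommGroup V] [Module (ZMod 2) V]
    (n r : ℕ) (P : V → ZMod 2) (hP : P 0 = 0)
    (hvanish : ∀ s, r + 1 < s → ∀ v : Fin s → V, derForm P s v = 0)
    (hdeg : ∃ v : Fin (r + 1) → V, derForm P (r + 1) v ≠ 0)
    (C : Submodule (ZMod 2) (Fin n → ZMod 2)) (φ : V ≃ₗ[ZMod 2] C)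
    (hdiv : ∀ v : V, 2 ^ r ∣ wt (φ v : Fin n → ZMod 2))
    (hPv : ∀ v : V, P v = ((wt (φ v : Fin n → ZMod 2) / 2 ^ r : ℕ) : ZMod 2))
    (hne : ∃ v : V, P v ≠ 0) :
    (∀ c ∈ C, 2 ^ r ∣ wt c) ∧ ¬(∀ c ∈ C, 2 ^ (r + 1) ∣ wt c) := by
  constructor
  · intro c hc
    have := hdiv (φ.symm ⟨c, hc⟩)
    simpa using this
  · intro hall
    obtain ⟨v, hv⟩ := hne
    obtain ⟨k, hk⟩ := hdiv v
    have h2 : 2 ^ (r + 1) ∣ wt (φ v : Fin n → ZMod 2) := hall _ (φ v).2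
    rw [hk, pow_succ] at h2
    have hk2 : 2 ∣ k := by
      rcases h2 with ⟨m, hm⟩
      have hpos : (0:ℕ) < 2 ^ r := pow_pos (by norm_num) r
      exact ⟨m, by nlinarith [Nat.eq_of_mul_eq_mul_left hpos (by linarith [hm] : 2 ^ r * k = 2 ^ r * (2 * m))]⟩
    apply hv
    rw [hPv v, hk, Nat.mul_div_cancel_left _ (pow_pos (by norm_num : (0:ℕ)<2) r)]
    obtain ⟨m, rfl⟩ := hk2
    push_cast
    exact mul_eq_zero_of_left (by decide) _
end

section
/- Let u_l ∈ ℝ^{2^l} be defined by u_{l,j} = 1/4 + (1/2)·φ(j), where for j = ∑ j_i 2^i with j_i ∈ {0,1}, φ(j) ≡ l − |j| (mod 2) counts the parity of the complement weight of j. Then for every subset S ⊆ {0,...,l−1}, ∑_{j : j_i = 1 for all i ∈ S} u_{l,j} = 2^{l−1−|S|} when S ⊊ {0,...,l−1}, while for S = {0,...,l−1} the sum equals u_{l, 2^l−1} = 1/4. -/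
/-!
Binary expansion identifies `j < 2^l` with the set `T ⊆ {0,…,l-1}` of its one bits, and
`u_{l,j}` depends only on the parity of `|U|`, where `U = {0,…,l-1} \ T` is the set of zero
bits. The condition `S ⊆ T` reads `U ⊆ C := {0,…,l-1} \ S`, so the sum is
`∑_{U ⊆ C} (1/4 + (|U| mod 2)/2)`.
For `C ≠ ∅` half of the `2^|C|` subsets are odd, giving `2^|C|/4 + 2^|C|/4 = 2^{|C|-1}`; for
`C = ∅` only `U = ∅` remains, giving `1/4`.
-/

/-- Number of ones among the first `l` binary digits of `j`. -/
def bitWeight (l j : ℕ) : ℕ :=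
  ((Finset.range l).filter fun i => j.testBit i).card

/-- The real vector `u_l ∈ ℝ^{2^l}`: `u_{l,j} = 1/4 + (1/2)·φ(j)`, where
`φ(j) = (l − |j|) mod 2` is the parity of the complement weight of `j`. -/
noncomputable def uvec (l j : ℕ) : ℝ :=
  1 / 4 + 1 / 2 * (((l - bitWeight l j) % 2 : ℕ) : ℝ)

open Finset

def oneBits (l j : ℕ) : Finset ℕ :=
  (range l).filter fun i => j.testBit i

theorem testBit_sum_two_pow (T : Finset ℕ) (i : ℕ) :
    (∑ k ∈ T, 2 ^ k).testBit i ↔ i ∈ T := by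
  rw [← Nat.mem_bitIndices, ← List.mem_toFinset, toFinset_bitIndices_sum_two_pow]

theorem oneBits_sum_two_pow {l : ℕ} {T : Finset ℕ} (hT : T ⊆ range l) :
    oneBits l (∑ k ∈ T, 2 ^ k) = T := by
  ext i
  simp only [oneBits, mem_filter, mem_range, testBit_sum_two_pow]
  exact ⟨And.right, fun hi => ⟨mem_range.1 (hT hi), hi⟩⟩

theorem sum_two_pow_oneBits {l j : ℕ} (hj : j < 2 ^ l) : ∑ k ∈ oneBits l j, 2 ^ k = j := by
  refine Nat.eq_of_testBit_eq fun i => Bool.eq_iff_iff.2 ?_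
  rw [testBit_sum_two_pow, oneBits, mem_filter, mem_range]
  refine ⟨And.right, fun hi => ⟨?_, hi⟩⟩
  by_contra! hli
  rw [Nat.testBit_lt_two_pow (hj.trans_le (Nat.pow_le_pow_right two_pos hli))] at hi
  exact Bool.false_ne_true hi

theorem sum_range_two_pow_oneBits {M : Type*} [AddCommMonoid M] (l : ℕ) (f : Finset ℕ → M) :
    ∑ j ∈ range (2 ^ l), f (oneBits l j) = ∑ T ∈ (range l).powerset, f T :=
  sum_nbij' (oneBits l) (fun T => ∑ k ∈ T, 2 ^ k)
    (fun _ _ => mem_powerset.2 (filter_subset _ _))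
    (fun _ hT => mem_range.2 (Nat.geomSum_lt le_rfl fun _ hk => mem_range.1 (mem_powerset.1 hT hk)))
    (fun _ hj => sum_two_pow_oneBits (mem_range.1 hj))
    (fun _ hT => oneBits_sum_two_pow (mem_powerset.1 hT))
    (fun _ _ => rfl)

theorem sum_powerset_filter_superset_sdiff {α M : Type*} [DecidableEq α] [AddCommMonoid M]
    {R S : Finset α} (hS : S ⊆ R) (g : Finset α → M) :
    ∑ T ∈ R.powerset with S ⊆ T, g (R \ T) = ∑ U ∈ (R \ S).powerset, g U :=
  sum_nbij' (R \ ·) (R \ ·)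
    (fun T hT => by
      rw [mem_filter, mem_powerset] at hT
      exact mem_powerset.2 (sdiff_subset_sdiff le_rfl hT.2))
    (fun U hU => by
      rw [mem_powerset] at hU
      exact mem_filter.2 ⟨mem_powerset.2 sdiff_subset,
        subset_sdiff.2 ⟨hS, disjoint_of_subset_right hU disjoint_sdiff⟩⟩)
    (fun T hT => Finset.sdiff_sdiff_eq_self (mem_powerset.1 (mem_filter.1 hT).1))
    (fun U hU => Finset.sdiff_sdiff_eq_self ((mem_powerset.1 hU).trans sdiff_subset))
    (fun _ _ => rfl)

noncomputable def parityWeight (k : ℕ) : ℝ :=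
  1 / 4 + 1 / 2 * ((k % 2 : ℕ) : ℝ)

theorem parityWeight_eq_neg_one_pow (k : ℕ) : parityWeight k = 1 / 2 - (-1) ^ k / 4 := by
  rcases Nat.even_or_odd k with hk | hk
  · rw [parityWeight, Nat.even_iff.1 hk, hk.neg_one_pow]; norm_num
  · rw [parityWeight, Nat.odd_iff.1 hk, hk.neg_one_pow]; norm_num

theorem sum_powerset_parityWeight {α : Type*} {C : Finset α} (hC : C.Nonempty) :
    ∑ U ∈ C.powerset, parityWeight #U = 2 ^ #C / 2 := by
  have alternating : ∑ U ∈ C.powerset, (-1 : ℝ) ^ #U = 0 := by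
    exact_mod_cast sum_powerset_neg_one_pow_card_of_nonempty hC
  simp only [parityWeight_eq_neg_one_pow, sum_sub_distrib, ← sum_div, alternating, sum_const,
    card_powerset, nsmul_eq_mul]
  push_cast
  ring

theorem uvec_eq_parityWeight (l j : ℕ) : uvec l j = parityWeight #(range l \ oneBits l j) := by
  rw [uvec, parityWeight, oneBits, card_sdiff_of_subset (filter_subset _ _), card_range, bitWeight]

theorem sum_uvec_filter_eq_sum_powerset {l : ℕ} {S : Finset ℕ} (hS : S ⊆ range l) :
    ∑ j ∈ (range (2 ^ l)).filter (fun j => ∀ i ∈ S, j.testBit i), uvec l j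
      = ∑ U ∈ (range l \ S).powerset, parityWeight #U := by
  have hfilter : ∀ j, (∀ i ∈ S, j.testBit i) ↔ S ⊆ oneBits l j := fun j =>
    ⟨fun h i hi => mem_filter.2 ⟨hS hi, h i hi⟩, fun h i hi => (mem_filter.1 (h hi)).2⟩
  simp only [hfilter, uvec_eq_parityWeight]
  rw [sum_filter, sum_range_two_pow_oneBits l fun T => if S ⊆ T then
    parityWeight #(range l \ T) else 0, ← sum_filter]
  exact sum_powerset_filter_superset_sdiff hS fun U => parityWeight #U

theorem uvec_partial_sums_general (l : ℕ) (S : Finset ℕ)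
    (hS : S ⊆ Finset.range l) :
    (S ≠ Finset.range l →
      ∑ j ∈ (Finset.range (2 ^ l)).filter (fun j => ∀ i ∈ S, j.testBit i),
        uvec l j = 2 ^ (l - 1 - S.card)) ∧
    (S = Finset.range l →
      ∑ j ∈ (Finset.range (2 ^ l)).filter (fun j => ∀ i ∈ S, j.testBit i),
        uvec l j = 1 / 4) := by
  rw [sum_uvec_filter_eq_sum_powerset hS]
  refine ⟨fun hne => ?_, fun hS_eq => ?_⟩
  · have hssub : S ⊂ range l := ssubset_of_subset_of_ne hS hne
    have hcard : #S < l := by simpa using card_lt_card hssub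
    rw [sum_powerset_parityWeight (sdiff_nonempty.2 (not_subset_of_ssubset hssub)),
      card_sdiff_of_subset hS, card_range, show l - #S = l - 1 - #S + 1 by omega, pow_succ]
    ring
  · simp [hS_eq, parityWeight]

/-- Key counting lemma: for `S ⊆ {0,…,l−1}`, the sum of `u_{l,j}` over those `j`
whose `i`-th bit is `1` for all `i ∈ S` equals `2^{l−1−|S|}` when `S` is proper,
and equals `u_{l,2^l−1} = 1/4` when `S = {0,…,l−1}`. -/
theorem uvec_partial_sums (l : ℕ) (hl : 1 ≤ l) (S : Finset ℕ)
    (hS : S ⊆ Finset.range l) :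
    (S ≠ Finset.range l →
      ∑ j ∈ (Finset.range (2 ^ l)).filter (fun j => ∀ i ∈ S, j.testBit i),
        uvec l j = 2 ^ (l - 1 - S.card)) ∧
    (S = Finset.range l →
      ∑ j ∈ (Finset.range (2 ^ l)).filter (fun j => ∀ i ∈ S, j.testBit i),
        uvec l j = 1 / 4) :=
  uvec_partial_sums_general l S hS
end

section
/- If C ≤ F_2^n is a binary linear code such that 2^r divides |c| for every c in some spanning set S of C and 2^{r−|A|+1} divides |∏A| for every subset A ⊆ S with 2 ≤ |A| ≤ r+1, then 2^r divides |c| for every codeword c ∈ C. -/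
/-!
For bits `x₁, …, x_k` one has `1 - 2 (x₁ + ⋯ + x_k mod 2) = ∏ (1 - 2 xᵢ)` over `ℤ`; expanding the
product and summing over the coordinates gives `n - 2 |∑ T| = ∑_{J ⊆ T} (-2)^|J| |∏ J|`.
A codeword is the sum of a subset `T` of `S`, and the hypotheses make every term with `J ≠ ∅`
divisible by `2^(r+1)`.
-/

open Finset

namespace ZMod

theorem eq_zero_or_eq_one (c : ZMod 2) : c = 0 ∨ c = 1 := by
  revert c; decide

theorem one_sub_two_mul_val_add (a b : ZMod 2) :
    1 - 2 * ((a + b).val : ℤ) = (1 - 2 * (a.val : ℤ)) * (1 - 2 * (b.val : ℤ)) := by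
  fin_cases a <;> fin_cases b <;> rfl

theorem val_mul_eq_mul_val (a b : ZMod 2) : ((a * b).val : ℤ) = (a.val : ℤ) * b.val := by
  fin_cases a <;> fin_cases b <;> rfl

theorem one_sub_two_mul_val_sum {ι : Type*} (s : Finset ι) (x : ι → ZMod 2) :
    1 - 2 * ((∑ i ∈ s, x i).val : ℤ) = ∏ i ∈ s, (1 - 2 * ((x i).val : ℤ)) := by
  classical
  induction s using Finset.induction_on with
  | empty => simp
  | insert a s ha ih => rw [sum_insert ha, prod_insert ha, one_sub_two_mul_val_add, ih]

theorem val_prod_eq_prod_val {ι : Type*} (s : Finset ι) (x : ι → ZMod 2) :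
    ((∏ i ∈ s, x i).val : ℤ) = ∏ i ∈ s, ((x i).val : ℤ) := by
  classical
  induction s using Finset.induction_on with
  | empty => rfl
  | insert a s ha ih => rw [prod_insert ha, prod_insert ha, val_mul_eq_mul_val, ih]

end ZMod

theorem Submodule.exists_subset_sum_eq_of_mem_span_zmod_two {M : Type*} [AddCommGroup M]
    [Module (ZMod 2) M] {s : Finset M} {x : M} (hx : x ∈ span (ZMod 2) (s : Set M)) :
    ∃ t ⊆ s, ∑ a ∈ t, a = x := by
  obtain ⟨f, -, rfl⟩ := mem_span_finset.mp hx
  refine ⟨s.filter (f · = 1), filter_subset _ _, ?_⟩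
  rw [sum_filter]
  refine sum_congr rfl fun a _ => ?_
  rcases ZMod.eq_zero_or_eq_one (f a) with h | h <;> simp [h]

theorem wt_eq_sum_val {n : ℕ} (v : Fin n → ZMod 2) : (wt v : ℤ) = ∑ i, ((v i).val : ℤ) := by
  rw [wt, card_filter, Nat.cast_sum]
  refine sum_congr rfl fun i _ => ?_
  rcases ZMod.eq_zero_or_eq_one (v i) with h | h <;> simp [h, ZMod.val_one]

theorem card_sub_two_mul_wt_sum {n : ℕ} (T : Finset (Fin n → ZMod 2)) :
    (n : ℤ) - 2 * wt (∑ v ∈ T, v) = ∑ J ∈ T.powerset, (-2) ^ #J * (wt (∏ v ∈ J, v) : ℤ) := by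
  simp_rw [wt_eq_sum_val, mul_sum, Finset.sum_apply, Finset.prod_apply]
  have hn : (n : ℤ) = ∑ _i : Fin n, 1 := by simp
  rw [sum_comm, hn, ← sum_sub_distrib]
  refine sum_congr rfl fun i _ => ?_
  rw [ZMod.one_sub_two_mul_val_sum]
  simp_rw [sub_eq_add_neg, ← neg_mul, prod_one_add, prod_mul_distrib, prod_const,
    ZMod.val_prod_eq_prod_val]

theorem neg_two_mul_wt_sum {n : ℕ} (T : Finset (Fin n → ZMod 2)) :
    -2 * (wt (∑ v ∈ T, v) : ℤ) =
      ∑ J ∈ T.powerset.erase ∅, (-2) ^ #J * (wt (∏ v ∈ J, v) : ℤ) := by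
  have h := card_sub_two_mul_wt_sum T
  rw [← sum_erase_add _ _ (empty_mem_powerset T)] at h
  have hwt : wt (1 : Fin n → ZMod 2) = n := by simp [wt]
  simp only [card_empty, pow_zero, prod_empty, hwt, one_mul] at h
  linarith

theorem two_pow_succ_dvd_neg_two_pow_mul_wt_prod {n r : ℕ} {S : Finset (Fin n → ZMod 2)}
    (h1 : ∀ c ∈ S, 2 ^ r ∣ wt c)
    (h2 : ∀ A ⊆ S, 2 ≤ #A → #A ≤ r + 1 → 2 ^ (r - #A + 1) ∣ wt (∏ c ∈ A, c))
    {J : Finset (Fin n → ZMod 2)} (hJS : J ⊆ S) (hJ : J ≠ ∅) :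
    (2 : ℤ) ^ (r + 1) ∣ (-2) ^ #J * (wt (∏ v ∈ J, v) : ℤ) := by
  have hpow (k : ℕ) : (2 : ℤ) ^ k ∣ (-2) ^ k := pow_dvd_pow_of_dvd (dvd_neg.mpr dvd_rfl) k
  obtain hJ1 | ⟨hJ2, hJr⟩ | hJbig : #J = 1 ∨ (2 ≤ #J ∧ #J ≤ r + 1) ∨ r + 1 < #J := by
    have := card_pos.mpr (nonempty_iff_ne_empty.mpr hJ); omega
  · obtain ⟨v, rfl⟩ := card_eq_one.mp hJ1
    rw [card_singleton, prod_singleton, pow_one, pow_succ', neg_mul, dvd_neg]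
    exact mul_dvd_mul_left 2 (by exact_mod_cast h1 v (hJS (mem_singleton_self v)))
  · -- `r - #J` truncates when `#J = r + 1`, hence only an inequality of exponents
    refine (pow_dvd_pow 2 (show r + 1 ≤ #J + (r - #J + 1) by omega)).trans ?_
    rw [pow_add]
    exact mul_dvd_mul (hpow _) (by exact_mod_cast h2 J hJS hJ2 hJr)
  · exact dvd_mul_of_dvd_left ((pow_dvd_pow 2 hJbig.le).trans (hpow _)) _

/-- Divisibility criterion: if every vector in a spanning set `S` of `C` has weight
divisible by `2^r`, and `2^{r−|A|+1}` divides `|∏A|` for every `A ⊆ S` with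
`2 ≤ |A| ≤ r+1`, then `2^r` divides the weight of every codeword of `C`. -/
theorem level_from_spanning_set (n r : ℕ) (S : Finset (Fin n → ZMod 2))
    (C : Submodule (ZMod 2) (Fin n → ZMod 2))
    (hspan : Submodule.span (ZMod 2) (S : Set (Fin n → ZMod 2)) = C)
    (h1 : ∀ c ∈ S, 2 ^ r ∣ wt c)
    (h2 : ∀ A ⊆ S, 2 ≤ A.card → A.card ≤ r + 1 →
      2 ^ (r - A.card + 1) ∣ wt (∏ c ∈ A, c)) :
    ∀ c ∈ C, 2 ^ r ∣ wt c := by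
  intro c hc
  obtain ⟨T, hTS, rfl⟩ :=
    Submodule.exists_subset_sum_eq_of_mem_span_zmod_two (hspan ▸ hc)
  have hdvd : (2 : ℤ) ^ (r + 1) ∣ -2 * (wt (∑ v ∈ T, v) : ℤ) := by
    rw [neg_two_mul_wt_sum]
    refine dvd_sum fun J hJ => ?_
    obtain ⟨hJT, hJ⟩ := mem_erase.mp hJ |>.symm
    exact two_pow_succ_dvd_neg_two_pow_mul_wt_prod h1 h2 ((mem_powerset.mp hJT).trans hTS) hJ
  rw [pow_succ, neg_mul, dvd_neg, mul_comm 2] at hdvd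
  exact_mod_cast Int.dvd_of_mul_dvd_mul_right two_ne_zero hdvd
end
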